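/- arXiv:2305.16013 — 8 statements merged into one kernel-verified Lean document; each statement's English description precedes it below -/
import Mathlib

section
/- Let n₀ and d be real constants with n₀ ≥ d ≥ 0 and n₀ > 0. Then for every real n ≥ n₀, 1/(1 + 1/((1+d/n)^n - 1)) ≥ (1/(1 + 1/(e^d - 1))) · (1 - (1/n) · n₀(exp(d²/n₀) - 1)/(exp(d) - 1)), provided d > 0 so all denominators are positive. -/
/-!
Write `A = (1 + d/n)^n`, `E = e^d` and `C = n₀ (e^{d²/n₀} - 1)`. Since `1/(1 + 1/(x - 1)) = 1 - 1/x`,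
the inequality reduces to `E ≤ A (1 + C/n)`. From `log (1 + x) ≥ x - x²` we get `A ≥ e^{d - d²/n}`,
i.e. `E ≤ A e^{d²/n}`; and by convexity of `exp` the map `t ↦ t (e^{c/t} - 1)` is decreasing,
so `n (e^{d²/n} - 1) ≤ C`.
-/

open Real Set

lemma Real.sub_sq_le_log_one_add {x : ℝ} (hx : 0 ≤ x) : x - x ^ 2 ≤ log (1 + x) := by
  have hx1 : 0 < 1 + x := by linarith
  calc x - x ^ 2 ≤ x / (1 + x) := by
        rw [le_div_iff₀ hx1]
        nlinarith [pow_nonneg hx 3]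
    _ = 1 - (1 + x)⁻¹ := by field_simp; ring
    _ ≤ log (1 + x) := one_sub_inv_le_log_of_pos hx1

lemma Real.exp_sub_sq_div_le_one_add_div_rpow {d n : ℝ} (hd : 0 ≤ d) (hn : 0 < n) :
    exp (d - d ^ 2 / n) ≤ (1 + d / n) ^ n := by
  rw [rpow_def_of_pos (by positivity), exp_le_exp]
  calc d - d ^ 2 / n = n * (d / n - (d / n) ^ 2) := by field_simp
    _ ≤ n * log (1 + d / n) := by gcongr; exact sub_sq_le_log_one_add (by positivity)
    _ = log (1 + d / n) * n := mul_comm _ _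

lemma ConvexOn.sub_le_div_mul_sub {s : Set ℝ} {f : ℝ → ℝ} (hf : ConvexOn ℝ s f) {x a : ℝ}
    (h0 : 0 ∈ s) (hxs : x ∈ s) (has : a ∈ s) (hx : 0 ≤ x) (hxa : x ≤ a) :
    f x - f 0 ≤ x / a * (f a - f 0) := by
  rcases hx.eq_or_lt with rfl | hx
  · simp
  have hslope := hf.secant_mono h0 hxs has hx.ne' (hx.trans_le hxa).ne' hxa
  rw [sub_zero, sub_zero] at hslope
  calc f x - f 0 = x * ((f x - f 0) / x) := by field_simp
    _ ≤ x * ((f a - f 0) / a) := by gcongr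
    _ = x / a * (f a - f 0) := by ring

lemma Real.antitoneOn_mul_exp_div_sub_one {c : ℝ} (hc : 0 ≤ c) :
    AntitoneOn (fun t ↦ t * (exp (c / t) - 1)) (Ioi 0) := by
  intro s hs t ht hst
  simp only [mem_Ioi] at hs ht
  rcases hc.eq_or_lt with rfl | hc
  · simp
  have key := convexOn_exp.sub_le_div_mul_sub (mem_univ 0) (mem_univ (c / t)) (mem_univ (c / s))
    (by positivity) (div_le_div_of_nonneg_left hc.le hs hst)
  rw [exp_zero] at key
  calc t * (exp (c / t) - 1) ≤ t * (c / t / (c / s) * (exp (c / s) - 1)) := by gcongr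
    _ = s * (exp (c / s) - 1) := by field_simp

lemma one_div_one_add_one_div_sub_one {x : ℝ} (h0 : x ≠ 0) (h1 : x ≠ 1) :
    1 / (1 + 1 / (x - 1)) = 1 - 1 / x := by
  rw [one_add_div (sub_ne_zero.mpr h1), sub_add_cancel, one_div_div, one_sub_div h0]

theorem stmt_3_general (n₀ d : ℝ) (hd : 0 < d) (hn₀ : 0 < n₀)
    (n : ℝ) (hn : n₀ ≤ n) :
    1 / (1 + 1 / ((1 + d / n) ^ (n : ℝ) - 1)) ≥
      (1 / (1 + 1 / (Real.exp d - 1))) *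
        (1 - (1 / n) * (n₀ * (Real.exp (d ^ 2 / n₀) - 1) / (Real.exp d - 1))) := by
  have hn0 : 0 < n := hn₀.trans_le hn
  set A := (1 + d / n) ^ n
  set E := exp d
  set C := n₀ * (exp (d ^ 2 / n₀) - 1)
  have hA : 1 < A := one_lt_rpow (by have := div_pos hd hn0; linarith) hn0
  have hE : 1 < E := one_lt_exp_iff.mpr hd
  have hscale : exp (d ^ 2 / n) ≤ 1 + C / n := by
    have := antitoneOn_mul_exp_div_sub_one (sq_nonneg d) (mem_Ioi.mpr hn₀) (mem_Ioi.mpr hn0) hn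
    rw [← sub_le_iff_le_add', le_div_iff₀ hn0]
    linarith
  have hEA : E ≤ A * (1 + C / n) := calc
    E = exp (d - d ^ 2 / n) * exp (d ^ 2 / n) := by rw [← exp_add, sub_add_cancel]
    _ ≤ A * (1 + C / n) := mul_le_mul (exp_sub_sq_div_le_one_add_div_rpow hd.le hn0) hscale
        (exp_pos _).le (by linarith)
  rw [one_div_one_add_one_div_sub_one (by positivity) hA.ne',
    one_div_one_add_one_div_sub_one (by positivity) hE.ne', ge_iff_le]
  have hE1 : E - 1 ≠ 0 := by linarith
  calc (1 - 1 / E) * (1 - 1 / n * (C / (E - 1))) = 1 - (1 + C / n) / E := by field_simp; ring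
    _ ≤ 1 - 1 / A := by
      refine sub_le_sub_left ?_ 1
      rw [div_le_div_iff₀ (by positivity) (by positivity)]
      linarith

theorem stmt_3 (n₀ d : ℝ) (hd : 0 < d) (hn₀d : d ≤ n₀) (hn₀ : 0 < n₀)
    (n : ℝ) (hn : n₀ ≤ n) :
    1 / (1 + 1 / ((1 + d / n) ^ (n : ℝ) - 1)) ≥
      (1 / (1 + 1 / (Real.exp d - 1))) *
        (1 - (1 / n) * (n₀ * (Real.exp (d ^ 2 / n₀) - 1) / (Real.exp d - 1))) :=
  stmt_3_general n₀ d hd hn₀ n hn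
end

section
/- Let f : 2^V → ℝ be submodular (f(A) + f(B) ≥ f(A∩B) + f(A∪B) for all A, B ⊆ V) and monotone (A ⊆ B implies f(A) ≤ f(B)). For a partition V = P₁ ∪ ⋯ ∪ P_k, define g on k-tuples of pairwise disjoint subsets of V by g(X₁,…,X_k) := f(⋃_a (P_a ∩ X_a)). Then g is k-submodular: g(X) + g(Y) ≥ g(X ⊓ Y) + g(X ⊔ Y), where (X ⊓ Y)_a := X_a ∩ Y_a and (X ⊔ Y)_a := (X_a ∪ Y_a) \ ⋃_{b≠a}(X_b ∪ Y_b). -/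
open Set

theorem add_le_add_of_subset_inter_of_subset_union {α : Type*} {f : Set α → ℝ}
    (hsub : ∀ A B : Set α, f (A ∩ B) + f (A ∪ B) ≤ f A + f B)
    (hmono : ∀ A B : Set α, A ⊆ B → f A ≤ f B)
    {A B C D : Set α} (hC : C ⊆ A ∩ B) (hD : D ⊆ A ∪ B) :
    f C + f D ≤ f A + f B :=
  (add_le_add (hmono _ _ hC) (hmono _ _ hD)).trans (hsub A B)

section RestrictedUnion

variable {ι α : Type*} (P X Y : ι → Set α)

theorem iUnion_inter_inter_subset :
    ⋃ a, P a ∩ (X a ∩ Y a) ⊆ (⋃ a, P a ∩ X a) ∩ ⋃ a, P a ∩ Y a :=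
  (iUnion_mono fun _ => (inter_inter_distrib_left _ _ _).subset).trans iUnion_inter_subset

theorem iUnion_inter_union_diff_subset (D : ι → Set α) :
    ⋃ a, P a ∩ ((X a ∪ Y a) \ D a) ⊆ (⋃ a, P a ∩ X a) ∪ ⋃ a, P a ∩ Y a := by
  rw [← iUnion_union_distrib]
  refine iUnion_mono fun a => ?_
  rw [← inter_union_distrib_left]
  exact inter_subset_inter_right _ sdiff_subset

end RestrictedUnion

theorem stmt_7_general {V : Type*} (k : ℕ) (f : Set V → ℝ)
    (hsub : ∀ A B : Set V, f (A ∩ B) + f (A ∪ B) ≤ f A + f B)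
    (hmono : ∀ A B : Set V, A ⊆ B → f A ≤ f B)
    (P : Fin k → Set V)
    (g : (Fin k → Set V) → ℝ)
    (hg : ∀ X : Fin k → Set V, g X = f (⋃ a, P a ∩ X a))
    (X Y : Fin k → Set V) :
    g (fun a => X a ∩ Y a) +
      g (fun a => (X a ∪ Y a) \ ⋃ b ∈ {b : Fin k | b ≠ a}, (X b ∪ Y b)) ≤
      g X + g Y := by
  simp only [hg]
  exact add_le_add_of_subset_inter_of_subset_union hsub hmono
    (iUnion_inter_inter_subset P X Y) (iUnion_inter_union_diff_subset P X Y _)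

theorem stmt_7 {V : Type*} (k : ℕ) (f : Set V → ℝ)
    (hsub : ∀ A B : Set V, f (A ∩ B) + f (A ∪ B) ≤ f A + f B)
    (hmono : ∀ A B : Set V, A ⊆ B → f A ≤ f B)
    (P : Fin k → Set V)
    (hPcover : ∀ x : V, ∃ a, x ∈ P a)
    (hPdisj : ∀ a b : Fin k, a ≠ b → Disjoint (P a) (P b))
    (g : (Fin k → Set V) → ℝ)
    (hg : ∀ X : Fin k → Set V, g X = f (⋃ a, P a ∩ X a))
    (X Y : Fin k → Set V)
    (hX : ∀ a b : Fin k, a ≠ b → Disjoint (X a) (X b))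
    (hY : ∀ a b : Fin k, a ≠ b → Disjoint (Y a) (Y b)) :
    g (fun a => X a ∩ Y a) +
      g (fun a => (X a ∪ Y a) \ ⋃ b ∈ {b : Fin k | b ≠ a}, (X b ∪ Y b)) ≤
      g X + g Y :=
  stmt_7_general k f hsub hmono P g hg X Y
end

section
/- Let f : 2^V → ℝ≥0 be a nonnegative submodular function on a finite set V, let S* ⊆ V, and let T be a random subset of V \ S* in which each element appears with probability at most p (marginally, with arbitrary correlations). Then E[f(S* ∪ T)] ≥ (1 − p) · f(S*). -/
/-! Let `x a` be the probability that `a ∈ T`. Peeling off an element `a` with maximal `x a`,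
submodularity gives `E g(P ∪ T) ≥ E g(insert a P ∪ (T \ {a})) - (1 - x a) (g (insert a P) - g P)`,
and induction, with `x a` as the new bound on the remaining inclusion probabilities, yields
`E g(P ∪ T) ≥ (1 - p) g P`; unrolled, this is the evaluation of the Lovász extension along the
chain of elements sorted by `x`. As `Ω` is finite, points of `V` with the same pattern
`{ω | i ∈ T ω}` are interchangeable, so `f` is first moved to the finite ground set of patterns. -/

open scoped Classical

noncomputable def inclusionProb {G Ω : Type*} [Fintype Ω] (μ : Ω → ℝ) (T : Ω → Set G) (a : G) : ℝ :=
  ∑ ω, if a ∈ T ω then μ ω else 0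

section

variable {G Ω : Type*} [Fintype Ω] {g : Set G → ℝ}

lemma insert_union_sub_le_of_submodular
    (hsub : ∀ A B : Set G, g (A ∩ B) + g (A ∪ B) ≤ g A + g B) (P A : Set G) {a : G} (ha : a ∉ A) :
    g (insert a P ∪ A) - g (P ∪ A) ≤ g (insert a P) - g P := by
  have hinter : (P ∪ A) ∩ insert a P = P := by
    ext i
    by_cases hi : i = a
    · subst hi; simp [ha]
    · simp [hi]; exact Or.inl
  have hunion : (P ∪ A) ∪ insert a P = insert a P ∪ A := by
    ext i; simp only [Set.mem_union, Set.mem_insert_iff]; tauto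
  have := hsub (P ∪ A) (insert a P)
  rw [hinter, hunion] at this
  linarith

variable (μ : Ω → ℝ) (T : Ω → Set G)

lemma sum_mul_insert_union_le (hsub : ∀ A B : Set G, g (A ∩ B) + g (A ∪ B) ≤ g A + g B)
    (hμ0 : ∀ ω, 0 ≤ μ ω) (hμ1 : ∑ ω, μ ω = 1) (P : Set G) {s : Finset G} {a : G} (ha : a ∉ s) :
    ∑ ω, μ ω * g (insert a P ∪ (T ω ∩ s)) ≤
      ∑ ω, μ ω * g (P ∪ (T ω ∩ ↑(insert a s))) +
        (1 - inclusionProb μ T a) * (g (insert a P) - g P) := by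
  have hpointwise : ∀ ω, μ ω * g (insert a P ∪ (T ω ∩ s)) ≤
      μ ω * g (P ∪ (T ω ∩ ↑(insert a s))) +
        (μ ω - if a ∈ T ω then μ ω else 0) * (g (insert a P) - g P) := by
    intro ω
    by_cases haT : a ∈ T ω
    · have hset : P ∪ (T ω ∩ ↑(insert a s)) = insert a P ∪ (T ω ∩ s) := by
        ext i
        by_cases hi : i = a
        · subst hi; simp [haT]
        · simp [hi]
      rw [hset, if_pos haT, sub_self, zero_mul, add_zero]
    · have hset : P ∪ (T ω ∩ ↑(insert a s)) = P ∪ (T ω ∩ s) := by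
        simp [Set.inter_insert_of_notMem haT]
      have := insert_union_sub_le_of_submodular hsub P (T ω ∩ s) (fun h => ha h.2)
      rw [hset, if_neg haT]
      nlinarith [hμ0 ω]
  calc ∑ ω, μ ω * g (insert a P ∪ (T ω ∩ s))
      ≤ ∑ ω, (μ ω * g (P ∪ (T ω ∩ ↑(insert a s))) +
          (μ ω - if a ∈ T ω then μ ω else 0) * (g (insert a P) - g P)) :=
        Finset.sum_le_sum fun ω _ => hpointwise ω
    _ = _ := by
      rw [Finset.sum_add_distrib, ← Finset.sum_mul, Finset.sum_sub_distrib, hμ1]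
      rfl

lemma inclusionProb_nonneg (hμ0 : ∀ ω, 0 ≤ μ ω) (a : G) : 0 ≤ inclusionProb μ T a :=
  Finset.sum_nonneg fun ω _ => by split_ifs <;> simp [hμ0 ω]

theorem one_sub_mul_le_sum_mul_union_inter (hg0 : ∀ A, 0 ≤ g A)
    (hsub : ∀ A B : Set G, g (A ∩ B) + g (A ∪ B) ≤ g A + g B)
    (hμ0 : ∀ ω, 0 ≤ μ ω) (hμ1 : ∑ ω, μ ω = 1) (s : Finset G) (P : Set G) {b : ℝ} (hb0 : 0 ≤ b)
    (hb : ∀ a ∈ s, inclusionProb μ T a ≤ b) :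
    (1 - b) * g P ≤ ∑ ω, μ ω * g (P ∪ (T ω ∩ s)) := by
  induction s using Finset.induction_on_max_value (inclusionProb μ T) generalizing P b with
  | empty =>
    simp only [Finset.coe_empty, Set.inter_empty, Set.union_empty, ← Finset.sum_mul, hμ1]
    nlinarith [hg0 P]
  | insert a s ha hmax ih =>
    have hxa := inclusionProb_nonneg μ T hμ0 a
    have hxab := hb a (Finset.mem_insert_self a s)
    have hrest := ih (insert a P) hxa hmax
    have hstep := sum_mul_insert_union_le μ T hsub hμ0 hμ1 P ha
    nlinarith [hg0 P]

end

theorem stmt_10 {V : Type*} (f : Set V → ℝ)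
    (hnonneg : ∀ A : Set V, 0 ≤ f A)
    (hsub : ∀ A B : Set V, f (A ∩ B) + f (A ∪ B) ≤ f A + f B)
    (Sstar : Set V) (p : ℝ) (hp : 0 ≤ p)
    (Ω : Type*) [Fintype Ω] (μ : Ω → ℝ)
    (hμ0 : ∀ ω, 0 ≤ μ ω) (hμ1 : ∑ ω : Ω, μ ω = 1)
    (T : Ω → Set V)
    (hT : ∀ ω, T ω ⊆ Set.univ \ Sstar)
    (hmarg : ∀ i : V, i ∉ Sstar →
      ∑ ω : Ω, (if i ∈ T ω then μ ω else 0) ≤ p) :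
    (1 - p) * f Sstar ≤ ∑ ω : Ω, μ ω * f (Sstar ∪ T ω) := by
  set pattern : V → Set Ω := fun i => {ω | i ∈ T ω}
  set s : Finset (Set Ω) := (Set.toFinite (pattern '' Sstarᶜ)).toFinset
  set g : Set (Set Ω) → ℝ := fun X => f (Sstar ∪ pattern ⁻¹' X)
  have hgsub : ∀ A B, g (A ∩ B) + g (A ∪ B) ≤ g A + g B := fun A B => by
    have := hsub (Sstar ∪ pattern ⁻¹' A) (Sstar ∪ pattern ⁻¹' B)
    rwa [← Set.union_inter_distrib_left, ← Set.union_union_distrib_left, ← Set.preimage_inter,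
      ← Set.preimage_union] at this
  have hg_empty : g ∅ = f Sstar := by simp [g]
  have hg_sample : ∀ ω, g ({X | ω ∈ X} ∩ s) = f (Sstar ∪ T ω) := fun ω => by
    have hpreimage : pattern ⁻¹' ({X | ω ∈ X} ∩ s) = T ω := by
      ext i
      simp only [s, pattern, Set.preimage_inter, Set.Finite.coe_toFinset, Set.mem_inter_iff,
        Set.mem_preimage, Set.mem_ofPred_eq, Set.mem_image, and_iff_left_iff_imp]
      exact fun hi => ⟨i, ((hT ω) hi).2, rfl⟩
    simp only [g, hpreimage]
  have hmarg' : ∀ X ∈ s, inclusionProb μ (fun ω => {X | ω ∈ X}) X ≤ p := by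
    intro X hX
    obtain ⟨i, hi, rfl⟩ := (Set.Finite.mem_toFinset _).mp hX
    exact hmarg i hi
  have := one_sub_mul_le_sum_mul_union_inter (g := g) μ (fun ω => {X : Set Ω | ω ∈ X})
    (fun A => hnonneg _) hgsub hμ0 hμ1 s ∅ hp hmarg'
  simpa only [Set.empty_union, hg_sample, hg_empty] using this
end

section
/- Fix positive reals d ≥ 1 and integer n ≥ 1, and let c := (1+d)/((1+d/n)^n − 1) and Q := (1+d)(1 + 1/((1+d/n)^n − 1)). Suppose reals w, m, β satisfy w ≥ β ≥ 0 and m ≥ 0. Then (2w − β) + (d·β + c·w − c·(1+d/n)^n · m) ≤ Q·(w − m). -/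
/-!
Write `p = (1 + d/n)^n > 1`. Then `Q = 1 + d + c = c·p`, and the claim reduces to
`(d - 1)·β ≤ (d - 1)·w`, which holds since `d ≥ 1` and `β ≤ w`.
-/

lemma one_lt_one_add_div_pow {d : ℝ} (hd : 0 < d) {n : ℕ} (hn : n ≠ 0) :
    1 < (1 + d / n) ^ n :=
  one_lt_pow₀ (lt_add_of_pos_right 1 (by positivity)) hn

lemma mul_one_add_one_div_sub_one {p : ℝ} (hp : p ≠ 1) (a : ℝ) :
    a * (1 + 1 / (p - 1)) = a / (p - 1) * p := by
  have : p - 1 ≠ 0 := sub_ne_zero.2 hp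
  field_simp
  ring

lemma two_mul_sub_add_le_of_le {d c p w m β : ℝ} (hd : 1 ≤ d) (hwβ : β ≤ w) :
    (2 * w - β) + (d * β + c * w - c * p * m) ≤ (1 + d + c) * w - c * p * m := by
  nlinarith [mul_le_mul_of_nonneg_left hwβ (sub_nonneg.2 hd)]

theorem stmt_12_general (n : ℕ) (hn : 1 ≤ n) (d : ℝ) (hd : 1 ≤ d)
    (c Q : ℝ)
    (hc : c = (1 + d) / ((1 + d / n) ^ n - 1))
    (hQ : Q = (1 + d) * (1 + 1 / ((1 + d / n) ^ n - 1)))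
    (w m β : ℝ) (hwβ : β ≤ w) :
    (2 * w - β) + (d * β + c * w - c * (1 + d / n) ^ n * m) ≤ Q * (w - m) := by
  have hp : 1 < (1 + d / n) ^ n :=
    one_lt_one_add_div_pow (by linarith) (Nat.one_le_iff_ne_zero.1 hn)
  have hQc : Q = 1 + d + c := by rw [hQ, hc]; ring
  have hQp : Q = c * (1 + d / n) ^ n := by
    rw [hQ, hc]; exact mul_one_add_one_div_sub_one hp.ne' _
  calc (2 * w - β) + (d * β + c * w - c * (1 + d / n) ^ n * m)
      ≤ (1 + d + c) * w - c * (1 + d / n) ^ n * m := two_mul_sub_add_le_of_le hd hwβ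
    _ = Q * (w - m) := by linear_combination (-w) * hQc + m * hQp

theorem stmt_12 (n : ℕ) (hn : 1 ≤ n) (d : ℝ) (hd : 1 ≤ d)
    (c Q : ℝ)
    (hc : c = (1 + d) / ((1 + d / n) ^ n - 1))
    (hQ : Q = (1 + d) * (1 + 1 / ((1 + d / n) ^ n - 1)))
    (w m β : ℝ) (hwβ : β ≤ w) (hβ : 0 ≤ β) (hm : 0 ≤ m) :
    (2 * w - β) + (d * β + c * w - c * (1 + d / n) ^ n * m) ≤ Q * (w - m) :=
  stmt_12_general n hn d hd c Q hc hQ w m β hwβ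
end

section
/- Fix an integer n ≥ 1 and real d > 0, and define g(i) := (c/n)(1+d/n)^{i-1} for a constant c > 0. Let w(1) ≥ w(2) ≥ ⋯ ≥ w(n+1) ≥ 0 be nonincreasing reals and let 1 ≤ j ≤ n+1. Define β' := ∑_{i=1}^{n} w(i)g(i) and β := ∑_{i=1}^{j-1} w(i)g(i) + ∑_{i=j+1}^{n+1} w(i)g(i−1). Then n(β' − β) ≤ d·β + c·w(j) − c·(1+d/n)^n · w(n+1). -/
/-!
Since `n * g (i + 1) = (n + d) * g i`, the quantity `n (β' - β) - d β` equals
`n β' - (n + d) β`. On the indices `i ≥ j` this telescopes to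
`c (1 + d/n)^(j-1) w j - c (1 + d/n)^n w (n+1)`; on the indices `i < j` it is
`-d ∑ w i g i ≤ -d w j ∑ g i = -c ((1 + d/n)^(j-1) - 1) w j` by monotonicity and the
geometric sum.
-/

open Finset

section GeometricWeights

variable {R : Type*} {G : ℕ → R} {q : R}

theorem sub_one_mul_sum_range_of_succ_eq_mul [CommRing R] (hG : ∀ k, G (k + 1) = q * G k)
    (m : ℕ) : (q - 1) * ∑ k ∈ range m, G k = G m - G 0 := by
  rw [← sum_range_sub, mul_sum]
  exact sum_congr rfl fun k _ => by rw [hG]; ring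

theorem sum_Ico_mul_sub_mul_sum_Ico_succ_mul [CommRing R] (hG : ∀ k, G (k + 1) = q * G k)
    (W : ℕ → R) {m N : ℕ} (hmN : m ≤ N) :
    ∑ k ∈ Ico m N, W k * G k - q * ∑ k ∈ Ico m N, W (k + 1) * G k
      = W m * G m - W N * G N := by
  have hshift (k : ℕ) : W (k + 1) * G (k + 1) = q * (W (k + 1) * G k) := by
    rw [hG]; ring
  have htele := sum_Ico_sub (fun k => W k * G k) hmN
  simp only [hshift, sum_sub_distrib, ← mul_sum] at htele
  linear_combination -htele

theorem mul_sum_range_le_sum_range_mul [CommRing R] [PartialOrder R] [IsOrderedRing R]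
    {W : ℕ → R} {m : ℕ} (hW : ∀ k ≤ m, W m ≤ W k) (hG : ∀ k, 0 ≤ G k) :
    W m * ∑ k ∈ range m, G k ≤ ∑ k ∈ range m, W k * G k := by
  rw [mul_sum]
  exact sum_le_sum fun k hk =>
    mul_le_mul_of_nonneg_right (hW k (mem_range.mp hk).le) (hG k)

theorem sum_range_mul_sub_mul_insert_le [CommRing R] [PartialOrder R] [IsOrderedRing R]
    (hG : ∀ k, G (k + 1) = q * G k) (hG_nonneg : ∀ k, 0 ≤ G k) (hq : 1 ≤ q)
    {W : ℕ → R} {m N : ℕ} (hW : ∀ k ≤ m, W m ≤ W k) (hmN : m ≤ N) :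
    ∑ k ∈ range N, W k * G k
        - q * (∑ k ∈ range m, W k * G k + ∑ k ∈ Ico m N, W (k + 1) * G k)
      ≤ W m * G 0 - W N * G N := by
  have htele := sum_Ico_mul_sub_mul_sum_Ico_succ_mul hG W hmN
  have hgeom := sub_one_mul_sum_range_of_succ_eq_mul hG m
  have hhead : (q - 1) * (W m * ∑ k ∈ range m, G k) ≤ (q - 1) * ∑ k ∈ range m, W k * G k :=
    mul_le_mul_of_nonneg_left (mul_sum_range_le_sum_range_mul hW hG_nonneg) (sub_nonneg.2 hq)
  rw [← sum_range_add_sum_Ico _ hmN]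
  linear_combination htele + hhead - W m * hgeom

end GeometricWeights

theorem sum_Icc_add_one_eq_sum_Ico {M : Type*} [AddCommMonoid M] (f : ℕ → M) (a b : ℕ) :
    ∑ i ∈ Icc (a + 1) b, f i = ∑ k ∈ Ico a b, f (k + 1) := by
  rw [sum_Ico_add', Ico_add_one_right_eq_Icc]

theorem stmt_13_general (n : ℕ) (hn : 1 ≤ n) (d : ℝ) (hd : 0 < d) (c : ℝ) (hc : 0 < c)
    (g : ℕ → ℝ) (hg : ∀ i, g i = (c / n) * (1 + d / n) ^ (i - 1))
    (w : ℕ → ℝ)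
    (hmono : ∀ i₁ i₂ : ℕ, 1 ≤ i₁ → i₁ ≤ i₂ → i₂ ≤ n + 1 → w i₂ ≤ w i₁)
    (j : ℕ) (hj1 : 1 ≤ j) (hjn : j ≤ n + 1)
    (β' β : ℝ)
    (hβ' : β' = ∑ i ∈ Finset.Icc 1 n, w i * g i)
    (hβ : β = ∑ i ∈ Finset.Icc 1 (j - 1), w i * g i +
        ∑ i ∈ Finset.Icc (j + 1) (n + 1), w i * g (i - 1)) :
    (n : ℝ) * (β' - β) ≤ d * β + c * w j - c * (1 + d / n) ^ n * w (n + 1) := by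
  obtain ⟨m, rfl⟩ : ∃ m, j = m + 1 := ⟨j - 1, by omega⟩
  have hn0 : (n : ℝ) ≠ 0 := Nat.cast_ne_zero.2 (by omega)
  set q := 1 + d / n
  have hG (k : ℕ) : g (k + 1 + 1) = q * g (k + 1) := by
    simp only [hg, Nat.add_sub_cancel]; ring
  have hG_nonneg (k : ℕ) : 0 ≤ g (k + 1) := by rw [hg]; positivity
  have hq : 1 ≤ q := le_add_of_nonneg_right (by positivity)
  have hinsert := sum_range_mul_sub_mul_insert_le (G := fun k => g (k + 1)) hG hG_nonneg hq
    (W := fun k => w (k + 1)) (fun k hk => hmono _ _ (by omega) (by omega) (by omega))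
    (show m ≤ n by omega)
  have hβ'_range : β' = ∑ k ∈ range n, w (k + 1) * g (k + 1) := by
    rw [hβ', ← zero_add 1, sum_Icc_add_one_eq_sum_Ico, range_eq_Ico]
  have hβ_range : β = ∑ k ∈ range m, w (k + 1) * g (k + 1) +
      ∑ k ∈ Ico m n, w (k + 1 + 1) * g (k + 1) := by
    rw [hβ, ← zero_add 1, Nat.add_sub_cancel, sum_Icc_add_one_eq_sum_Ico, ← range_eq_Ico,
      sum_Icc_add_one_eq_sum_Ico, ← sum_Ico_add']
    simp only [Nat.add_sub_cancel]
  beta_reduce at hinsert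
  rw [← hβ'_range, ← hβ_range, hg, hg] at hinsert
  simp only [Nat.add_sub_cancel, pow_zero, mul_one] at hinsert
  have hnq : (n : ℝ) * q = n + d := by simp only [q]; field_simp
  calc (n : ℝ) * (β' - β) = n * (β' - q * β) + d * β := by linear_combination β * hnq
    _ ≤ n * (w (m + 1) * (c / n) - w (n + 1) * (c / n * q ^ n)) + d * β := by gcongr
    _ = d * β + c * w (m + 1) - c * q ^ n * w (n + 1) := by field_simp; ring

theorem stmt_13 (n : ℕ) (hn : 1 ≤ n) (d : ℝ) (hd : 0 < d) (c : ℝ) (hc : 0 < c)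
    (g : ℕ → ℝ) (hg : ∀ i, g i = (c / n) * (1 + d / n) ^ (i - 1))
    (w : ℕ → ℝ)
    (hmono : ∀ i₁ i₂ : ℕ, 1 ≤ i₁ → i₁ ≤ i₂ → i₂ ≤ n + 1 → w i₂ ≤ w i₁)
    (hwpos : 0 ≤ w (n + 1))
    (j : ℕ) (hj1 : 1 ≤ j) (hjn : j ≤ n + 1)
    (β' β : ℝ)
    (hβ' : β' = ∑ i ∈ Finset.Icc 1 n, w i * g i)
    (hβ : β = ∑ i ∈ Finset.Icc 1 (j - 1), w i * g i +
        ∑ i ∈ Finset.Icc (j + 1) (n + 1), w i * g (i - 1)) :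
    (n : ℝ) * (β' - β) ≤ d * β + c * w j - c * (1 + d / n) ^ n * w (n + 1) :=
  stmt_13_general n hn d hd c hc g hg w hmono j hj1 hjn β' β hβ' hβ
end

section
/- Let n₁ ≥ n₂ ≥ ⋯ ≥ n_k ≥ 0 and 0 ≤ β₁ ≤ β₂ ≤ ⋯ ≤ β_k be reals with k ≥ 2, and suppose n₁ = (1−α)∑_{a=1}^{k} n_a for some 0 < α < 1. Then n₁β₂ + (∑_{a=2}^{k} n_a)·β₁ ≤ max{(1−α)/α, 1} · ∑_{a=1}^{k} n_a β_a. -/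
theorem stmt_14 (k : ℕ) (hk : 2 ≤ k) (n β : Fin k → ℝ)
    (hn : ∀ a b : Fin k, a ≤ b → n b ≤ n a)
    (hn0 : ∀ a, 0 ≤ n a)
    (hβ : ∀ a b : Fin k, a ≤ b → β a ≤ β b)
    (hβ0 : ∀ a, 0 ≤ β a)
    (α : ℝ) (hα0 : 0 < α) (hα1 : α < 1)
    (hmax : n ⟨0, by omega⟩ = (1 - α) * ∑ a : Fin k, n a) :
    n ⟨0, by omega⟩ * β ⟨1, by omega⟩ +
        (∑ a ∈ Finset.univ.erase (⟨0, by omega⟩ : Fin k), n a) * β ⟨0, by omega⟩ ≤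
      max ((1 - α) / α) 1 * ∑ a : Fin k, n a * β a := by
  set z0 : Fin k := ⟨0, by omega⟩ with hz0
  set z1 : Fin k := ⟨1, by omega⟩ with hz1
  set S := ∑ a : Fin k, n a with hS
  have hS0 : 0 ≤ S := Finset.sum_nonneg fun a _ => hn0 a
  have hSsplit : S = n z0 + ∑ a ∈ Finset.univ.erase z0, n a := by
    rw [hS, ← Finset.add_sum_erase _ _ (Finset.mem_univ z0)]
  have hEr : ∑ a ∈ Finset.univ.erase z0, n a = α * S := by
    have := hmax; nlinarith [hSsplit]
  have hTsplit : ∑ a : Fin k, n a * β a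
      = n z0 * β z0 + ∑ a ∈ Finset.univ.erase z0, n a * β a := by
    rw [← Finset.add_sum_erase _ _ (Finset.mem_univ z0)]
  set R := ∑ a ∈ Finset.univ.erase z0, n a * β a with hR
  have hR1 : β z1 * (α * S) ≤ R := by
    rw [← hEr, Finset.mul_sum, hR]
    apply Finset.sum_le_sum
    intro a ha
    have hne := Finset.ne_of_mem_erase ha
    have hv : (1 : ℕ) ≤ a.val := by
      by_contra hcon
      have h0 : a.val = 0 := by omega
      exact hne (by rw [hz0]; exact Fin.ext h0)
    have h1 : z1 ≤ a := by rw [hz1, Fin.le_def]; exact hv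
    nlinarith [hβ z1 a h1, hn0 a]
  have hb01 : β z0 ≤ β z1 := hβ z0 z1 (by rw [hz0, hz1]; exact Fin.mk_le_mk.mpr (Nat.zero_le 1))
  have hb0 : 0 ≤ β z0 := hβ0 z0
  rcases le_total α (1/2) with h | h
  · have hM : max ((1 - α) / α) 1 = (1 - α) / α :=
      max_eq_left (by rw [le_div_iff₀ hα0]; linarith)
    rw [hM, hTsplit, hEr, hmax, div_mul_eq_mul_div, le_div_iff₀ hα0]
    nlinarith [hR1, mul_nonneg hS0 hb0, mul_nonneg hS0 (hβ0 z1)]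
  · have hM : max ((1 - α) / α) 1 = 1 :=
      max_eq_right (by rw [div_le_one hα0]; linarith)
    rw [hM, hTsplit, hEr, hmax, one_mul]
    nlinarith [hR1, mul_nonneg hS0 (sub_nonneg.mpr hb01)]
end

section
/- For real d > 0, define Φ(d) := d/((1+d)² · (1 + 1/(e^d − 1))). Then Φ is maximized at the unique positive solution d* of e^d(d−1) − d² − 2d + 1 = 0, this d* lies in (1.9, 2), and Φ(d*) > 0.192. -/
/-!
For `d > 0`, `Φ d = d (1 - e^{-d}) / (1 + d)^2`, and with `G d = e^d (d - 1) - d^2 - 2d + 1`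
(`criticalFun`) one gets `Φ' d = -G d e^{-d} / (1 + d)^3`. Since `G 0 = 0` and
`G' d = d (e^d - 2 - 2/d)`, whose second factor is strictly increasing on `(0, ∞)`, `G` first
decreases and then increases there. Hence `G` has a unique positive zero `d*`, is negative before
it and positive after it, and `Φ` increases up to `d*` and decreases afterwards. The numerical
claims follow from `G 1.9 < 0 < G 2` and `Φ 1.9 > 0.192`.
-/

open Real Set

noncomputable def criticalFun (x : ℝ) : ℝ := exp x * (x - 1) - x ^ 2 - 2 * x + 1

noncomputable def Φ (x : ℝ) : ℝ := x * (1 - exp (-x)) / (1 + x) ^ 2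

theorem valley_neg_Ioo_pos_Ioi {f : ℝ → ℝ} {a c d : ℝ}
    (hanti : StrictAntiOn f (Icc a c)) (hmono : StrictMonoOn f (Ici c))
    (ha : f a ≤ 0) (hd : f d = 0) (had : a < d) :
    (∀ x ∈ Ioo a d, f x < 0) ∧ ∀ x ∈ Ioi d, 0 < f x := by
  have hcd : c < d := by
    by_contra! hdc
    have := hanti (left_mem_Icc.2 (had.le.trans hdc)) ⟨had.le, hdc⟩ had
    linarith
  refine ⟨fun x ⟨hax, hxd⟩ => ?_, fun x (hdx : d < x) => ?_⟩
  · rcases le_or_gt x c with hxc | hcx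
    · linarith [hanti (left_mem_Icc.2 (hax.le.trans hxc)) ⟨hax.le, hxc⟩ hax]
    · linarith [hmono (mem_Ici.2 hcx.le) (mem_Ici.2 hcd.le) hxd]
  · linarith [hmono (mem_Ici.2 hcd.le) (mem_Ici.2 (hcd.trans hdx).le) hdx]

theorem exp_one_nine_gt : (6.68 : ℝ) < exp 1.9 :=
  (by norm_num [Finset.sum_range_succ, Nat.factorial] :
    (6.68 : ℝ) < ∑ i ∈ Finset.range 8, (1.9 : ℝ) ^ i / i.factorial).trans_le
    (sum_le_exp_of_nonneg (by norm_num) 8)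

theorem exp_one_nine_lt : exp 1.9 < 6.72 := by
  have hsplit : exp 1.9 * exp 0.1 = exp 1 * exp 1 := by
    rw [← exp_add, ← exp_add]; norm_num
  nlinarith [add_one_le_exp (0.1 : ℝ), exp_one_lt_d9, exp_pos 1, exp_pos 1.9]

theorem seven_lt_exp_two : (7 : ℝ) < exp 2 :=
  (by norm_num [Finset.sum_range_succ, Nat.factorial] :
    (7 : ℝ) < ∑ i ∈ Finset.range 6, (2 : ℝ) ^ i / i.factorial).trans_le
    (sum_le_exp_of_nonneg (by norm_num) 6)

theorem hasDerivAt_criticalFun (x : ℝ) :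
    HasDerivAt criticalFun (x * exp x - 2 * x - 2) x := by
  refine (((((hasDerivAt_exp x).mul ((hasDerivAt_id' x).sub_const 1)).sub
    (hasDerivAt_pow 2 x)).sub ((hasDerivAt_id' x).const_mul 2)).add_const 1).congr_deriv ?_
  push_cast
  ring

theorem strictMonoOn_exp_sub_two_sub_two_div :
    StrictMonoOn (fun x => exp x - 2 - 2 / x) (Ioi 0) := by
  intro x (hx : 0 < x) y _ hxy
  have := div_lt_div_of_pos_left two_pos hx hxy
  simp only
  linarith [exp_lt_exp.2 hxy]

theorem exists_sign_change_deriv_criticalFun : ∃ c, 0 < c ∧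
    (∀ x ∈ Ioo 0 c, x * exp x - 2 * x - 2 < 0) ∧
    ∀ x ∈ Ioi c, 0 < x * exp x - 2 * x - 2 := by
  obtain ⟨c, ⟨hc, -⟩, hc0⟩ : ∃ c ∈ Ioo (0 : ℝ) 1.9, c * exp c - 2 * c - 2 = 0 := by
    refine intermediate_value_Ioo (by norm_num) (by fun_prop) ⟨by simp, ?_⟩
    nlinarith [exp_one_nine_gt]
  have factor : ∀ x, 0 < x → x * exp x - 2 * x - 2 = x * (exp x - 2 - 2 / x) := by
    intro x hx; field_simp
  have hk : exp c - 2 - 2 / c = 0 :=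
    (mul_eq_zero.1 ((factor c hc).symm.trans hc0)).resolve_left hc.ne'
  refine ⟨c, hc, fun x ⟨hx, hxc⟩ => ?_, fun x (hcx : c < x) => ?_⟩
  · rw [factor x hx]
    exact mul_neg_of_pos_of_neg hx (hk ▸ strictMonoOn_exp_sub_two_sub_two_div hx hc hxc)
  · rw [factor x (hc.trans hcx)]
    exact mul_pos (hc.trans hcx)
      (hk ▸ strictMonoOn_exp_sub_two_sub_two_div hc (hc.trans hcx) hcx)

theorem exists_criticalFun_eq_zero : ∃ d ∈ Ioo (1.9 : ℝ) 2, criticalFun d = 0 ∧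
    (∀ x ∈ Ioo 0 d, criticalFun x < 0) ∧ ∀ x ∈ Ioi d, 0 < criticalFun x := by
  obtain ⟨c, -, hneg, hpos⟩ := exists_sign_change_deriv_criticalFun
  have hcont : Continuous criticalFun := by unfold criticalFun; fun_prop
  have hanti : StrictAntiOn criticalFun (Icc 0 c) :=
    strictAntiOn_of_hasDerivWithinAt_neg (convex_Icc 0 c) hcont.continuousOn
      (fun x _ => (hasDerivAt_criticalFun x).hasDerivWithinAt) (by simpa using hneg)
  have hmono : StrictMonoOn criticalFun (Ici c) :=
    strictMonoOn_of_hasDerivWithinAt_pos (convex_Ici c) hcont.continuousOn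
      (fun x _ => (hasDerivAt_criticalFun x).hasDerivWithinAt) (by simpa using hpos)
  obtain ⟨d, hd, hd0⟩ : ∃ d ∈ Ioo (1.9 : ℝ) 2, criticalFun d = 0 := by
    refine intermediate_value_Ioo (by norm_num) hcont.continuousOn ⟨?_, ?_⟩ <;>
      simp only [criticalFun] <;> nlinarith [exp_one_nine_lt, seven_lt_exp_two]
  exact ⟨d, hd, hd0,
    valley_neg_Ioo_pos_Ioi hanti hmono (by simp [criticalFun]) hd0 (by linarith [hd.1])⟩

theorem hasDerivAt_Φ {x : ℝ} (hx : 1 + x ≠ 0) :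
    HasDerivAt Φ (-criticalFun x * exp (-x) / (1 + x) ^ 3) x := by
  have hexp : HasDerivAt (fun y => exp (-y)) (-exp (-x)) x := by
    simpa using (hasDerivAt_neg x).exp
  refine (((hasDerivAt_id' x).mul (hexp.const_sub 1)).div
    (((hasDerivAt_id' x).const_add 1).pow 2) (pow_ne_zero 2 hx)).congr_deriv ?_
  simp only [Pi.pow_apply, Pi.mul_apply]
  rw [criticalFun, show exp x = (exp (-x))⁻¹ by rw [exp_neg, inv_inv]]
  field_simp
  ring

theorem monotoneOn_Φ {d : ℝ} (hneg : ∀ x ∈ Ioo 0 d, criticalFun x < 0) :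
    MonotoneOn Φ (Icc 0 d) := by
  have hderiv : ∀ x ∈ Icc 0 d, HasDerivAt Φ (-criticalFun x * exp (-x) / (1 + x) ^ 3) x :=
    fun x hx => hasDerivAt_Φ (by linarith [hx.1])
  refine monotoneOn_of_hasDerivWithinAt_nonneg (convex_Icc 0 d)
    (fun x hx => (hderiv x hx).continuousAt.continuousWithinAt)
    (fun x hx => (hderiv x (interior_subset hx)).hasDerivWithinAt) fun x hx => ?_
  rw [interior_Icc] at hx
  exact div_nonneg (mul_nonneg (neg_nonneg.2 (hneg x hx).le) (exp_pos _).le)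
    (pow_pos (by linarith [hx.1]) 3).le

theorem antitoneOn_Φ {d : ℝ} (hd : 0 ≤ d) (hpos : ∀ x ∈ Ioi d, 0 < criticalFun x) :
    AntitoneOn Φ (Ici d) := by
  have hderiv : ∀ x ∈ Ici d, HasDerivAt Φ (-criticalFun x * exp (-x) / (1 + x) ^ 3) x :=
    fun x (hx : d ≤ x) => hasDerivAt_Φ (by linarith)
  refine antitoneOn_of_hasDerivWithinAt_nonpos (convex_Ici d)
    (fun x hx => (hderiv x hx).continuousAt.continuousWithinAt)
    (fun x hx => (hderiv x (interior_subset hx)).hasDerivWithinAt) fun x hx => ?_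
  rw [interior_Ici] at hx
  exact div_nonpos_of_nonpos_of_nonneg
    (mul_nonpos_of_nonpos_of_nonneg (neg_nonpos.2 (hpos x hx).le) (exp_pos _).le)
    (pow_pos (by linarith [mem_Ioi.1 hx]) 3).le

theorem Φ_eq_div {x : ℝ} (hx : 0 < x) :
    Φ x = x / ((1 + x) ^ 2 * (1 + 1 / (exp x - 1))) := by
  have : exp x - 1 ≠ 0 := (sub_pos.2 (one_lt_exp_iff.2 hx)).ne'
  rw [Φ, exp_neg]
  field_simp
  ring

theorem lt_Φ_one_nine : (0.192 : ℝ) < Φ 1.9 := by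
  have : (exp 1.9)⁻¹ < 6.68⁻¹ := (inv_lt_inv₀ (exp_pos _) (by norm_num)).2 exp_one_nine_gt
  rw [Φ, exp_neg, lt_div_iff₀ (by norm_num)]
  norm_num at this ⊢
  linarith

theorem stmt_16 :
    (∃! d : ℝ, 0 < d ∧ Real.exp d * (d - 1) - d ^ 2 - 2 * d + 1 = 0) ∧
      ∀ d : ℝ, 0 < d → Real.exp d * (d - 1) - d ^ 2 - 2 * d + 1 = 0 →
        d ∈ Set.Ioo (1.9 : ℝ) 2 ∧
        (0.192 : ℝ) < d / ((1 + d) ^ 2 * (1 + 1 / (Real.exp d - 1))) ∧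
        ∀ d' : ℝ, 0 < d' →
          d' / ((1 + d') ^ 2 * (1 + 1 / (Real.exp d' - 1))) ≤
            d / ((1 + d) ^ 2 * (1 + 1 / (Real.exp d - 1))) := by
  obtain ⟨d₀, hd₀, hroot, hneg, hpos⟩ := exists_criticalFun_eq_zero
  have eq_of_root : ∀ d, 0 < d → criticalFun d = 0 → d = d₀ := by
    intro d hd hG
    by_contra hne
    rcases lt_or_gt_of_ne hne with h | h
    · exact (hneg d ⟨hd, h⟩).ne hG
    · exact (hpos d h).ne' hG
  have hd₀pos : 0 < d₀ := by linarith [hd₀.1]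
  refine ⟨⟨d₀, ⟨hd₀pos, hroot⟩, fun d hd => eq_of_root d hd.1 hd.2⟩,
    fun d hd hG => ?_⟩
  obtain rfl := eq_of_root d hd hG
  rw [← Φ_eq_div hd]
  refine ⟨hd₀, ?_, fun d' hd' => ?_⟩
  · calc (0.192 : ℝ) < Φ 1.9 := lt_Φ_one_nine
      _ ≤ Φ d := monotoneOn_Φ hneg ⟨by norm_num, hd₀.1.le⟩ ⟨hd.le, le_rfl⟩ hd₀.1.le
  · rw [← Φ_eq_div hd']
    rcases le_total d' d with h | h
    · exact monotoneOn_Φ hneg ⟨hd'.le, h⟩ ⟨hd.le, le_rfl⟩ h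
    · exact antitoneOn_Φ hd.le hpos self_mem_Ici h h
end

section
/- Fix reals d > 0 and 0 < ε ≤ 1 with ε·e^d > (1/d)(e^{dε} − 1), and set c := (e^{dε} − 1 + ε)/(ε·e^d − (1/d)(e^{dε} − 1)). Then for every u with 0 < u ≤ ε: (e^{du} − 1)/u · (c/d + 1) + 1 ≤ c·e^d. -/
/-!
The left-hand side is nondecreasing in `u`, because `(exp (d * u) - 1) / u` is the slope of a
secant of the convex function `x ↦ exp (d * x)` from `0`; at `u = ε` the inequality is an
equality by the choice of `c`.
-/

open Real

theorem convexOn_exp_mul (d : ℝ) : ConvexOn ℝ Set.univ fun x => exp (d * x) :=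
  convexOn_exp.comp_linearMap (LinearMap.mulLeft ℝ d)

theorem exp_mul_sub_one_div_le_of_le {d u v : ℝ} (hu : 0 < u) (huv : u ≤ v) :
    (exp (d * u) - 1) / u ≤ (exp (d * v) - 1) / v := by
  simpa using (convexOn_exp_mul d).secant_mono (Set.mem_univ 0) (Set.mem_univ u)
    (Set.mem_univ v) hu.ne' (hu.trans_le huv).ne' huv

theorem exp_mul_sub_one_div_mul_add_one_eq {d ε c : ℝ} (hd : d ≠ 0) (hε : ε ≠ 0)
    (hden : ε * exp d - 1 / d * (exp (d * ε) - 1) ≠ 0)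
    (hc : c = (exp (d * ε) - 1 + ε) / (ε * exp d - 1 / d * (exp (d * ε) - 1))) :
    (exp (d * ε) - 1) / ε * (c / d + 1) + 1 = c * exp d := by
  have hcD : c * (ε * exp d - 1 / d * (exp (d * ε) - 1)) = exp (d * ε) - 1 + ε :=
    (eq_div_iff hden).mp hc
  generalize exp (d * ε) = E at hcD ⊢
  field_simp
  field_simp at hcD
  linear_combination -hcD

theorem stmt_18_general (d ε : ℝ) (hd : 0 < d) (hε0 : 0 < ε)
    (hden : (1 / d) * (Real.exp (d * ε) - 1) < ε * Real.exp d)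
    (c : ℝ)
    (hc : c = (Real.exp (d * ε) - 1 + ε) / (ε * Real.exp d - (1 / d) * (Real.exp (d * ε) - 1)))
    (u : ℝ) (hu0 : 0 < u) (huε : u ≤ ε) :
    (Real.exp (d * u) - 1) / u * (c / d + 1) + 1 ≤ c * Real.exp d := by
  have hc0 : 0 ≤ c := by
    have : 1 ≤ exp (d * ε) := one_le_exp (by positivity)
    rw [hc]
    exact div_nonneg (by linarith) (by linarith)
  calc (exp (d * u) - 1) / u * (c / d + 1) + 1
      ≤ (exp (d * ε) - 1) / ε * (c / d + 1) + 1 := by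
        gcongr ?_ * _ + _
        exact exp_mul_sub_one_div_le_of_le hu0 huε
    _ = c * exp d := exp_mul_sub_one_div_mul_add_one_eq hd.ne' hε0.ne' (by linarith) hc

theorem stmt_18 (d ε : ℝ) (hd : 0 < d) (hε0 : 0 < ε) (hε1 : ε ≤ 1)
    (hden : (1 / d) * (Real.exp (d * ε) - 1) < ε * Real.exp d)
    (c : ℝ)
    (hc : c = (Real.exp (d * ε) - 1 + ε) / (ε * Real.exp d - (1 / d) * (Real.exp (d * ε) - 1)))
    (u : ℝ) (hu0 : 0 < u) (huε : u ≤ ε) :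
    (Real.exp (d * u) - 1) / u * (c / d + 1) + 1 ≤ c * Real.exp d :=
  stmt_18_general d ε hd hε0 hden c hc u hu0 huε
end
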